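/- Fix a CGS G, a state ṡ, a strategy profile x⃗ : Agts → X of variables all quantified in the block ♭, and a path variable π ∉ V. Suppose B is an automaton over alphabet (V → S) such that for every path assignment Π : V → S^ω, zip(Π) ∈ L(B) iff ♭̃. zip(Π[π ↦ play_G(ṡ, λi. f_{x⃗(i)})]) ∈ L(A) (where ♭̃ quantifies strategies f_x over Str(G) following ♭). If A is a (G, ṡ, k+1)-summary for the formula ♭_1 … ♭_m. ψ[π_j : x⃗_j]_{j=1}^m with π = π_k, x⃗ = x⃗_k, ♭ = ♭_k, then B is a (G, ṡ, k)-summary. -/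
import Mathlib


/-- Auxiliary: the current state and the prefix `p[0,j]` of the play. -/
def playAux {S A Agts : Type} (κ : S → (Agts → A) → S)
    (f : Agts → List S → A) (s : S) : ℕ → S × List S
  | 0 => (s, [s])
  | j + 1 =>
    let c := playAux κ f s j
    let nxt := κ c.1 (fun i => f i c.2)
    (nxt, c.2 ++ [nxt])

/-- `play κ f s` is the unique path resulting from the interaction of the
strategies in the profile `f`, started in `s`. -/
def play {S A Agts : Type} (κ : S → (Agts → A) → S)
    (f : Agts → List S → A) (s : S) : ℕ → S :=
  fun j => (playAux κ f s j).1

/-- Zipping of a path assignment into an infinite word: `zip Π j π = Π π j`. -/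
def zip {V S : Type} (Pa : V → ℕ → S) : ℕ → V → S := fun j π => Pa π j

/-- Quantification `♭̃` of a block of strategy quantifiers: the block is a
list of Booleans (`true` = existential, `false` = universal), and each
quantifier ranges over strategies `List S → A`. -/
def BlockQuant {S A : Type} :
    (bl : List Bool) → ((Fin bl.length → (List S → A)) → Prop) → Prop
  | [], P => P (fun i => i.elim0)
  | b :: bs, P =>
    if b then ∃ f : List S → A, BlockQuant bs (fun g => P (Fin.cons f g))
    else ∀ f : List S → A, BlockQuant bs (fun g => P (Fin.cons f g))


theorem BlockQuant_congr {S A : Type} :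
    ∀ (bl : List Bool) (P Q : (Fin bl.length → (List S → A)) → Prop),
    (∀ g, P g ↔ Q g) → (BlockQuant bl P ↔ BlockQuant bl Q)
  | [], P, Q, h => h _
  | b :: bs, P, Q, h => by
    simp only [BlockQuant]
    split
    · exact exists_congr fun f => BlockQuant_congr bs _ _ fun g => h _
    · exact forall_congr' fun f => BlockQuant_congr bs _ _ fun g => h _

/-- path variables `π_1, …, π_{k}` (alphabet `Fin k → S`) plus a
fresh variable `π = π_{k+1}` (so `A`'s alphabet is `Fin (k+1) → S`, with `π`
the last index, added via `Fin.snoc`). The block `♭ = bl` quantifies the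
strategy variables (indexed by `Fin bl.length`), all of which are quantified
in the block, and `xv` is the strategy profile assigning each agent one of
them. `R` is the `(G, ṡ, k+1)`-summary condition (the remaining nested
quantification `♭̃_{k+1}…♭̃_m. … ⊨ ψ`): `A` being a `(G, ṡ, k+1)`-summary is
`hA`. If `B` satisfies the simulation property `hB` — `zip Π ∈ L(B)` iff
`♭̃. zip (Π[π ↦ play(ṡ, profile)]) ∈ L(A)` — then `B` is a `(G, ṡ, k)`-summary:
`zip Π ∈ L(B)` iff `♭̃. R (Π[π ↦ play(ṡ, profile)])`. -/
theorem summary_step {S A Agts : Type} {k : ℕ}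
    (κ : S → (Agts → A) → S) (sdot : S)
    (bl : List Bool) (xv : Agts → Fin bl.length)
    (R : (Fin (k + 1) → ℕ → S) → Prop)
    (LA : Set (ℕ → (Fin (k + 1) → S))) (LB : Set (ℕ → (Fin k → S)))
    (hA : ∀ Pa : Fin (k + 1) → ℕ → S, zip Pa ∈ LA ↔ R Pa)
    (hB : ∀ Pa : Fin k → ℕ → S, zip Pa ∈ LB ↔
      BlockQuant bl (fun g =>
        zip (Fin.snoc Pa (play κ (fun i => g (xv i)) sdot)) ∈ LA)) :
    ∀ Pa : Fin k → ℕ → S, zip Pa ∈ LB ↔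
      BlockQuant bl (fun g =>
        R (Fin.snoc Pa (play κ (fun i => g (xv i)) sdot))) := by
  intro Pa
  rw [hB]
  exact BlockQuant_congr bl _ _ fun g => hA _
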